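/- Let ρ(r) = r + √(1 + r²). For every A > 0 one has 2A · ρ(1/A)^{ρ(A)} ≥ 1, and for every A > 0 and every δ ≥ 1 it holds that ρ(A) · (2A · ρ(1/A)^{ρ(A)})^{−1/δ} ≥ e^{−2}; in particular, for fixed A > 0 this quantity is monotonically increasing in δ on [1,∞). -/

import Mathlib

/-!
Since `ρ = exp ∘ arsinh`, the number `s := ρ(A) > 1` satisfies `2A = s - s⁻¹` and
`ρ(1/A) = (s + 1)/(s - 1)`, so `B := 2A·ρ(1/A)^{ρ(A)} = (s - s⁻¹)·((s + 1)/(s - 1))^s` and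
`log B = log s + (s + 1)·log((s + 1)/s) + (s - 1)·log(s/(s - 1))`.
Both logarithms are positive, and `log t ≤ sinh (log t) = (t - t⁻¹)/2` bounds the two products
by `(2s + 1)/(2s)` and `(2s - 1)/(2s)`; hence `s ≤ B ≤ e²·s`. The lower bound gives `B ≥ 1`, which
makes `δ ↦ B^{-1/δ}` increasing, and the upper bound gives `ρ(A)·B^{-1} ≥ e⁻²`.
-/

/-- `ρ(r) = r + √(1 + r²)`. -/
noncomputable def rho (r : ℝ) : ℝ := r + Real.sqrt (1 + r ^ 2)

open Real

lemma Real.log_le_half_sub_inv {t : ℝ} (ht : 1 ≤ t) : log t ≤ (t - t⁻¹) / 2 := by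
  rw [← sinh_log (by linarith)]
  exact self_le_sinh_iff.2 (log_nonneg ht)

lemma Real.log_sub_log_le {u v : ℝ} (hu : 0 < u) (huv : u ≤ v) :
    log v - log u ≤ (v ^ 2 - u ^ 2) / (2 * u * v) := by
  have hv : 0 < v := hu.trans_le huv
  have h := log_le_half_sub_inv ((one_le_div hu).2 huv)
  rw [log_div hv.ne' hu.ne', inv_div] at h
  calc log v - log u ≤ (v / u - u / v) / 2 := h
    _ = (v ^ 2 - u ^ 2) / (2 * u * v) := by field_simp

section OneLt

variable {s : ℝ}

lemma log_sub_inv_mul_rpow (hs : 1 < s) :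
    log ((s - s⁻¹) * ((s + 1) / (s - 1)) ^ s) =
      log s + ((s + 1) * (log (s + 1) - log s) + (s - 1) * (log s - log (s - 1))) := by
  have h0 : s ≠ 0 := by positivity
  have h1 : s - 1 ≠ 0 := by linarith
  have h2 : s + 1 ≠ 0 := by linarith
  have hsub : s - s⁻¹ = (s + 1) * (s - 1) / s := by field_simp; ring
  rw [log_mul (by rw [hsub]; positivity) (by positivity), log_rpow (by positivity), hsub,
    log_div (by positivity) h0, log_mul h2 h1, log_div h2 h1]
  ring

lemma sub_inv_mul_rpow_pos (hs : 1 < s) : 0 < (s - s⁻¹) * ((s + 1) / (s - 1)) ^ s := by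
  have : s⁻¹ < s := (inv_lt_one_of_one_lt₀ hs).trans hs
  have : 0 < s - 1 := by linarith
  have : 0 < s - s⁻¹ := by linarith
  positivity

lemma self_le_sub_inv_mul_rpow (hs : 1 < s) : s ≤ (s - s⁻¹) * ((s + 1) / (s - 1)) ^ s := by
  have h1 : 0 ≤ (s + 1) * (log (s + 1) - log s) :=
    mul_nonneg (by linarith) (sub_nonneg.2 (log_le_log (by linarith) (by linarith)))
  have h2 : 0 ≤ (s - 1) * (log s - log (s - 1)) :=
    mul_nonneg (by linarith) (sub_nonneg.2 (log_le_log (by linarith) (by linarith)))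
  rw [← log_le_log_iff (by linarith) (sub_inv_mul_rpow_pos hs), log_sub_inv_mul_rpow hs]
  linarith

lemma sub_inv_mul_rpow_le (hs : 1 < s) : (s - s⁻¹) * ((s + 1) / (s - 1)) ^ s ≤ exp 2 * s := by
  have h1 : (s + 1) * (log (s + 1) - log s) ≤ (2 * s + 1) / (2 * s) := by
    calc (s + 1) * (log (s + 1) - log s)
        ≤ (s + 1) * (((s + 1) ^ 2 - s ^ 2) / (2 * s * (s + 1))) :=
          mul_le_mul_of_nonneg_left (log_sub_log_le (by linarith) (by linarith)) (by linarith)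
      _ = (2 * s + 1) / (2 * s) := by field_simp; ring
  have h2 : (s - 1) * (log s - log (s - 1)) ≤ (2 * s - 1) / (2 * s) := by
    have : s - 1 ≠ 0 := by linarith
    calc (s - 1) * (log s - log (s - 1))
        ≤ (s - 1) * ((s ^ 2 - (s - 1) ^ 2) / (2 * (s - 1) * s)) :=
          mul_le_mul_of_nonneg_left (log_sub_log_le (by linarith) (by linarith)) (by linarith)
      _ = (2 * s - 1) / (2 * s) := by field_simp; ring
  have hsum : (2 * s + 1) / (2 * s) + (2 * s - 1) / (2 * s) = 2 := by
    field_simp; ring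
  rw [← log_le_log_iff (sub_inv_mul_rpow_pos hs) (by positivity), log_sub_inv_mul_rpow hs,
    log_mul (exp_pos 2).ne' (by positivity), log_exp]
  linarith

end OneLt

lemma rho_eq_exp_arsinh (r : ℝ) : rho r = exp (arsinh r) := by
  rw [exp_arsinh, rho]

lemma rho_sub_inv (r : ℝ) : rho r - (rho r)⁻¹ = 2 * r := by
  have h := sinh_log (exp_pos (arsinh r))
  rw [log_exp, sinh_arsinh] at h
  rw [rho_eq_exp_arsinh]
  linarith

lemma rho_half_sub_inv {t : ℝ} (ht : 0 < t) : rho ((t - t⁻¹) / 2) = t := by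
  rw [← sinh_log ht, rho_eq_exp_arsinh, arsinh_sinh, exp_log ht]

lemma one_lt_rho {r : ℝ} (hr : 0 < r) : 1 < rho r := by
  rw [rho_eq_exp_arsinh]
  exact one_lt_exp_iff.2 (arsinh_pos_iff.2 hr)

lemma rho_one_div {r : ℝ} (hr : 0 < r) : rho (1 / r) = (rho r + 1) / (rho r - 1) := by
  have hs := one_lt_rho hr
  have hr' := rho_sub_inv r
  set s := rho r
  have : s - 1 ≠ 0 := by linarith
  have : s ^ 2 - 1 ≠ 0 := by nlinarith
  have : 1 / r = ((s + 1) / (s - 1) - ((s + 1) / (s - 1))⁻¹) / 2 := by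
    rw [show r = (s - s⁻¹) / 2 by linarith]
    field_simp
    ring
  rw [this, rho_half_sub_inv (div_pos (by linarith) (by linarith))]

lemma two_mul_mul_rho_one_div_rpow {r : ℝ} (hr : 0 < r) :
    2 * r * rho (1 / r) ^ rho r = (rho r - (rho r)⁻¹) * ((rho r + 1) / (rho r - 1)) ^ rho r := by
  rw [rho_one_div hr, rho_sub_inv]

lemma rpow_neg_one_div_le_rpow_neg_one_div {x δ₁ δ₂ : ℝ} (hx : 1 ≤ x) (hδ₁ : 0 < δ₁)
    (hδ : δ₁ ≤ δ₂) : x ^ (-(1 / δ₁)) ≤ x ^ (-(1 / δ₂)) :=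
  rpow_le_rpow_of_exponent_le hx (neg_le_neg (one_div_le_one_div_of_le hδ₁ hδ))

/-- For every `A > 0` one has `2A·ρ(1/A)^{ρ(A)} ≥ 1`; for every `A > 0` and
`δ ≥ 1` it holds that `ρ(A)·(2A·ρ(1/A)^{ρ(A)})^{-1/δ} ≥ e⁻²`; and for fixed
`A > 0` this quantity is monotonically increasing in `δ` on `[1,∞)`. -/
theorem stmt7 :
    (∀ A : ℝ, 0 < A → 1 ≤ 2 * A * rho (1 / A) ^ rho A) ∧
    (∀ A : ℝ, 0 < A → ∀ δ : ℝ, 1 ≤ δ →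
      Real.exp (-2) ≤ rho A * (2 * A * rho (1 / A) ^ rho A) ^ (-(1 / δ))) ∧
    (∀ A : ℝ, 0 < A → ∀ δ₁ δ₂ : ℝ, 1 ≤ δ₁ → δ₁ ≤ δ₂ →
      rho A * (2 * A * rho (1 / A) ^ rho A) ^ (-(1 / δ₁)) ≤
        rho A * (2 * A * rho (1 / A) ^ rho A) ^ (-(1 / δ₂))) := by
  have bounds (A : ℝ) (hA : 0 < A) :
      rho A ≤ 2 * A * rho (1 / A) ^ rho A ∧ 2 * A * rho (1 / A) ^ rho A ≤ exp 2 * rho A := by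
    rw [two_mul_mul_rho_one_div_rpow hA]
    exact ⟨self_le_sub_inv_mul_rpow (one_lt_rho hA), sub_inv_mul_rpow_le (one_lt_rho hA)⟩
  have one_le (A : ℝ) (hA : 0 < A) : 1 ≤ 2 * A * rho (1 / A) ^ rho A :=
    (one_lt_rho hA).le.trans (bounds A hA).1
  refine ⟨one_le, fun A hA δ hδ => ?_, fun A hA δ₁ δ₂ hδ₁ hδ => ?_⟩
  · set B := 2 * A * rho (1 / A) ^ rho A
    have hρ : 0 < rho A := zero_lt_one.trans (one_lt_rho hA)
    calc exp (-2) = rho A / (exp 2 * rho A) := by rw [exp_neg]; field_simp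
      _ ≤ rho A / B :=
          div_le_div_of_nonneg_left hρ.le (by linarith [one_le A hA]) (bounds A hA).2
      _ = rho A * B ^ (-(1 / 1 : ℝ)) := by rw [div_one, rpow_neg_one, div_eq_mul_inv]
      _ ≤ rho A * B ^ (-(1 / δ)) := mul_le_mul_of_nonneg_left
          (rpow_neg_one_div_le_rpow_neg_one_div (one_le A hA) one_pos hδ) hρ.le
  · exact mul_le_mul_of_nonneg_left
      (rpow_neg_one_div_le_rpow_neg_one_div (one_le A hA) (by linarith) hδ)
      (zero_lt_one.trans (one_lt_rho hA)).le
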